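/- arXiv:2502.13850 — 6 statements merged into one kernel-verified Lean document; each statement's English description precedes it below -/
import Mathlib

section
/- The set P of consistent collections is the convex hull in ℝ^{2^J − 1} of the finite family consisting of the zero collection 0 and the collections p^{1,S} for all nonempty S ⊆ A; in particular, since this family is finite, P equals its closed convex hull. (Paper's Lemma 1.) -/
/-!
A probability distribution `π` on the power set of `A` is a point of the standard simplex
in `Finset A → ℝ`, and the collection it induces is `∑ W, π W • worldCollection W`. So `P` is
the image of the standard simplex under a linear map, i.e. the convex hull of the
`worldCollection W`; these are `0` (for `W = ∅`) and the `p^{1,S}`. A finite convex hull is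
closed.
-/

open Finset

variable {A : Type*} [Fintype A] [DecidableEq A]

/-- The set `P` of consistent collections: `p` belongs to `P` iff there is a probability
distribution `π` on the power set of `A` such that `p S = Σ_{W ⊇ S} π W` for every
nonempty `S ⊆ A`. -/
def memP (p : {S : Finset A // S.Nonempty} → ℝ) : Prop :=
  ∃ π : Finset A → ℝ, (∀ W, 0 ≤ π W) ∧ (∑ W : Finset A, π W = 1) ∧
    ∀ S : {S : Finset A // S.Nonempty},
      p S = ∑ W ∈ Finset.univ.filter (fun W : Finset A => S.1 ⊆ W), π W

/-- The collection `p^{1,S}`: value `1` on subsets of `S`, value `0` elsewhere. -/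
def pOne (S : {S : Finset A // S.Nonempty}) : {T : Finset A // T.Nonempty} → ℝ :=
  fun T => if T.1 ⊆ S.1 then 1 else 0

theorem convexHull_range_eq_image_stdSimplex {ι E : Type*} [Fintype ι] [DecidableEq ι]
    [AddCommGroup E] [Module ℝ E] (v : ι → E) :
    convexHull ℝ (Set.range v) = Fintype.linearCombination ℝ v '' stdSimplex ℝ ι := by
  rw [← convexHull_rangle_single_eq_stdSimplex, LinearMap.image_convexHull, ← Set.range_comp]
  congr 2
  funext i
  simp

/-- The collection induced by the point mass at `W`. -/
def worldCollection (W : Finset A) : {T : Finset A // T.Nonempty} → ℝ :=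
  fun T => if T.1 ⊆ W then 1 else 0

omit [Fintype A] in
theorem range_worldCollection :
    Set.range (worldCollection (A := A)) = insert 0 (Set.range pOne) := by
  have empty : worldCollection (∅ : Finset A) = 0 := by
    funext T
    simp [worldCollection, T.2.ne_empty]
  ext p
  constructor
  · rintro ⟨W, rfl⟩
    rcases W.eq_empty_or_nonempty with rfl | hW
    · exact Or.inl empty
    · exact Or.inr ⟨⟨W, hW⟩, rfl⟩
  · rintro (rfl | ⟨S, rfl⟩)
    · exact ⟨∅, empty⟩
    · exact ⟨S.1, rfl⟩

theorem memP_iff_mem_image_stdSimplex (p : {S : Finset A // S.Nonempty} → ℝ) :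
    memP p ↔ p ∈ Fintype.linearCombination ℝ worldCollection '' stdSimplex ℝ (Finset A) := by
  have induced (π : Finset A → ℝ) (S : {S : Finset A // S.Nonempty}) :
      Fintype.linearCombination ℝ worldCollection π S = ∑ W ∈ univ.filter (S.1 ⊆ ·), π W := by
    simp [Fintype.linearCombination_apply, worldCollection, Finset.sum_filter]
  constructor
  · rintro ⟨π, hπ₀, hπ₁, hp⟩
    exact ⟨π, ⟨hπ₀, hπ₁⟩, funext fun S => (induced π S).trans (hp S).symm⟩
  · rintro ⟨π, ⟨hπ₀, hπ₁⟩, rfl⟩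
    exact ⟨π, hπ₀, hπ₁, induced π⟩

theorem lemma1_general :
    {p : {S : Finset A // S.Nonempty} → ℝ | memP p} =
      convexHull ℝ (insert (0 : {S : Finset A // S.Nonempty} → ℝ) (Set.range pOne)) ∧
    {p : {S : Finset A // S.Nonempty} → ℝ | memP p} =
      closure (convexHull ℝ
        (insert (0 : {S : Finset A // S.Nonempty} → ℝ) (Set.range pOne))) := by
  have hull : {p : {S : Finset A // S.Nonempty} → ℝ | memP p} =
      convexHull ℝ (insert 0 (Set.range pOne)) := by
    ext p
    rw [← range_worldCollection, convexHull_range_eq_image_stdSimplex]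
    exact memP_iff_mem_image_stdSimplex p
  refine ⟨hull, ?_⟩
  rw [hull, (Set.Finite.isClosed_convexHull ℝ ((Set.finite_range pOne).insert 0)).closure_eq]

/-- Lemma 1: `P` is the convex hull of `0` together with the `p^{1,S}`, and (this family
being finite) `P` also equals the closed convex hull of this family. -/
theorem lemma1 (hJ : 1 ≤ Fintype.card A) :
    {p : {S : Finset A // S.Nonempty} → ℝ | memP p} =
      convexHull ℝ (insert (0 : {S : Finset A // S.Nonempty} → ℝ) (Set.range pOne)) ∧
    {p : {S : Finset A // S.Nonempty} → ℝ | memP p} =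
      closure (convexHull ℝ
        (insert (0 : {S : Finset A // S.Nonempty} → ℝ) (Set.range pOne))) :=
  lemma1_general
end

section
/- The set of extreme points of P is exactly {0} ∪ {p^{1,S} : ∅ ≠ S ⊆ A}. -/
/-!
`P` is the image of the probability simplex on the subsets of `A` under the linear map
`π ↦ (S ↦ π {W | S ⊆ W})`, so it is the convex hull of the images of the Dirac masses: the
0/1-collections `T ↦ [T ⊆ W]`, which are `0` for `W = ∅` and `p^{1,W}` otherwise. Extreme points
of a convex hull lie among the generators, and conversely each generator is extreme because
`P` lies in the unit cube, in which every 0/1-vector is extreme.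
-/

open Finset

variable {A : Type*} [Fintype A] [DecidableEq A]

theorem mem_extremePoints_of_subset_pi_Icc {ι : Type*} {s : Set (ι → ℝ)}
    (hs : s ⊆ Set.univ.pi fun _ => Set.Icc 0 1) {x : ι → ℝ} (hx : x ∈ s)
    (h : ∀ i, x i = 0 ∨ x i = 1) : x ∈ s.extremePoints ℝ := by
  refine inter_extremePoints_subset_extremePoints_of_subset hs ⟨hx, ?_⟩
  rw [extremePoints_pi]
  intro i _
  rw [Set.extremePoints_Icc zero_le_one]
  exact h i

def diracCollection (W : Finset A) : {T : Finset A // T.Nonempty} → ℝ :=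
  fun T => if T.1 ⊆ W then 1 else 0

def collectionOf : (Finset A → ℝ) →ₗ[ℝ] ({S : Finset A // S.Nonempty} → ℝ) where
  toFun π S := ∑ W ∈ univ.filter (fun W => S.1 ⊆ W), π W
  map_add' π ρ := by ext S; simp [sum_add_distrib]
  map_smul' c π := by ext S; simp [mul_sum]

lemma collectionOf_single (W : Finset A) : collectionOf (Pi.single W 1) = diracCollection W := by
  ext T
  simp [collectionOf, diracCollection]

lemma setOf_memP_eq_image :
    {p | memP p} = collectionOf '' stdSimplex ℝ (Finset A) := by
  ext p
  constructor
  · rintro ⟨π, hπ0, hπ1, hπ⟩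
    exact ⟨π, ⟨hπ0, hπ1⟩, funext fun S => (hπ S).symm⟩
  · rintro ⟨π, ⟨hπ0, hπ1⟩, rfl⟩
    exact ⟨π, hπ0, hπ1, fun S => rfl⟩

lemma setOf_memP_eq_convexHull :
    {p | memP p} = convexHull ℝ (Set.range (diracCollection (A := A))) := by
  rw [setOf_memP_eq_image, ← convexHull_rangle_single_eq_stdSimplex,
    LinearMap.image_convexHull, ← Set.range_comp]
  exact congrArg _ (congrArg _ (funext collectionOf_single))

section

omit [Fintype A]

lemma range_diracCollection :
    Set.range (diracCollection (A := A)) = insert 0 (Set.range pOne) := by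
  have h_empty : diracCollection (∅ : Finset A) = 0 := by
    ext T
    simp [diracCollection, T.2.ne_empty]
  ext p
  constructor
  · rintro ⟨W, rfl⟩
    obtain rfl | hW := W.eq_empty_or_nonempty
    · exact Or.inl h_empty
    · exact Or.inr ⟨⟨W, hW⟩, rfl⟩
  · rintro (rfl | ⟨S, rfl⟩)
    · exact ⟨∅, h_empty⟩
    · exact ⟨S.1, rfl⟩

lemma diracCollection_eq_zero_or_one (W : Finset A) (T : {T : Finset A // T.Nonempty}) :
    diracCollection W T = 0 ∨ diracCollection W T = 1 := by
  unfold diracCollection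
  split_ifs <;> simp

end

lemma setOf_memP_subset_pi_Icc :
    {p | memP p} ⊆ Set.univ.pi fun _ : {S : Finset A // S.Nonempty} => Set.Icc (0 : ℝ) 1 := by
  rw [setOf_memP_eq_convexHull]
  refine convexHull_min ?_ (convex_pi fun _ _ => convex_Icc 0 1)
  rintro _ ⟨W, rfl⟩ T -
  rcases diracCollection_eq_zero_or_one W T with h | h <;> simp [h]

theorem extreme_points_of_P_general :
    Set.extremePoints ℝ {p : {S : Finset A // S.Nonempty} → ℝ | memP p} =
      insert (0 : {S : Finset A // S.Nonempty} → ℝ) (Set.range pOne) := by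
  rw [← range_diracCollection]
  refine Set.Subset.antisymm ?_ ?_
  · rw [setOf_memP_eq_convexHull]
    exact extremePoints_convexHull_subset
  · rintro _ ⟨W, rfl⟩
    have hW : diracCollection W ∈ {p | memP p} := by
      rw [setOf_memP_eq_convexHull]
      exact subset_convexHull ℝ _ ⟨W, rfl⟩
    exact mem_extremePoints_of_subset_pi_Icc setOf_memP_subset_pi_Icc hW
      (diracCollection_eq_zero_or_one W)

/-- The set of extreme points of `P` is exactly `{0} ∪ {p^{1,S} : ∅ ≠ S ⊆ A}`. -/
theorem extreme_points_of_P (hJ : 1 ≤ Fintype.card A) :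
    Set.extremePoints ℝ {p : {S : Finset A // S.Nonempty} → ℝ | memP p} =
      insert (0 : {S : Finset A // S.Nonempty} → ℝ) (Set.range pOne) :=
  extreme_points_of_P_general
end

section
/- A collection p ∈ P takes values only in {0,1} if and only if p = 0 or p = p^{1,S} for some nonempty S ⊆ A. -/
open Finset

variable {A : Type*} [Fintype A] [DecidableEq A]

/-!
Proof idea: write `p_T = π(W ⊇ T)` for a probability distribution `π` on worlds `W ⊆ A`.
If every `p_{a}` is `0` or `1`, then each axiom `a` lies in `π`-almost no world or in
`π`-almost every world, so `π` is the point mass at `S = {a | p_{a} = 1}` and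
`p_T = [T ⊆ S]`; this is `0` when `S = ∅` and `p^{1,S}` otherwise.
-/

def supsetMass (π : Finset A → ℝ) (T : Finset A) : ℝ :=
  ∑ W ∈ univ.filter (fun W : Finset A => T ⊆ W), π W

section supsetMass

variable {π : Finset A → ℝ}

theorem mass_le_supsetMass (hπ : ∀ W, 0 ≤ π W) {T W : Finset A} (hTW : T ⊆ W) :
    π W ≤ supsetMass π T :=
  single_le_sum (fun W _ => hπ W) (mem_filter.2 ⟨mem_univ W, hTW⟩)

theorem supsetMass_singleton_add_sum_notMem (a : A) :
    supsetMass π {a} + ∑ W ∈ univ.filter (fun W : Finset A => a ∉ W), π W =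
      ∑ W, π W := by
  simp only [supsetMass, singleton_subset_iff]
  exact sum_filter_add_sum_filter_not _ _ _

theorem mass_eq_zero_of_supsetMass_singleton_eq_zero (hπ : ∀ W, 0 ≤ π W) {a : A}
    (ha : supsetMass π {a} = 0) {W : Finset A} (haW : a ∈ W) : π W = 0 :=
  le_antisymm (ha ▸ mass_le_supsetMass hπ (singleton_subset_iff.2 haW)) (hπ W)

theorem mass_eq_zero_of_supsetMass_singleton_eq_one (hπ : ∀ W, 0 ≤ π W)
    (hπ1 : ∑ W, π W = 1) {a : A} (ha : supsetMass π {a} = 1) {W : Finset A}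
    (haW : a ∉ W) : π W = 0 := by
  have hrest : ∑ W ∈ univ.filter (fun W : Finset A => a ∉ W), π W = 0 := by
    linarith [supsetMass_singleton_add_sum_notMem (π := π) a]
  exact (sum_eq_zero_iff_of_nonneg fun W _ => hπ W).1 hrest W
    (mem_filter.2 ⟨mem_univ W, haW⟩)

theorem mass_eq_zero_of_ne_of_supsetMass_singleton (hπ : ∀ W, 0 ≤ π W) (hπ1 : ∑ W, π W = 1)
    (h01 : ∀ a : A, supsetMass π {a} = 0 ∨ supsetMass π {a} = 1) {W : Finset A}
    (hW : W ≠ univ.filter (fun a => supsetMass π {a} = 1)) : π W = 0 := by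
  obtain ⟨a, ha⟩ : ∃ a, ¬(a ∈ W ↔ supsetMass π {a} = 1) := by
    by_contra! h
    exact hW (ext fun a => by simp [h a])
  rcases h01 a with h0 | h1
  · exact mass_eq_zero_of_supsetMass_singleton_eq_zero hπ h0 (by simp_all)
  · exact mass_eq_zero_of_supsetMass_singleton_eq_one hπ hπ1 h1 (by simp_all)

theorem supsetMass_eq_ite_of_mass_eq_zero (hπ1 : ∑ W, π W = 1) {S : Finset A}
    (hS : ∀ W ≠ S, π W = 0) (T : Finset A) :
    supsetMass π T = if T ⊆ S then 1 else 0 := by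
  have hπS : π S = 1 := by
    rwa [sum_eq_single S (fun W _ hW => hS W hW) (by simp)] at hπ1
  split_ifs with hTS
  · rw [supsetMass, sum_eq_single S (fun W _ hW => hS W hW) (by simp [hTS]), hπS]
  · exact sum_eq_zero fun W hW => hS W fun hWS => hTS (hWS ▸ (mem_filter.1 hW).2)

end supsetMass

theorem zero_one_valued_iff_general
    (p : {S : Finset A // S.Nonempty} → ℝ) (hp : memP p) :
    (∀ S, p S = 0 ∨ p S = 1) ↔
      (p = 0 ∨ ∃ S : {S : Finset A // S.Nonempty}, p = pOne S) := by
  constructor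
  · intro h01
    obtain ⟨π, hπ, hπ1, hpπ⟩ := hp
    replace hpπ : ∀ T, p T = supsetMass π T.1 := hpπ
    set S := univ.filter fun a => supsetMass π {a} = 1
    have hpoint : ∀ W ≠ S, π W = 0 := fun W =>
      mass_eq_zero_of_ne_of_supsetMass_singleton hπ hπ1 fun a =>
        hpπ ⟨{a}, singleton_nonempty a⟩ ▸ h01 _
    have hpS : ∀ T, p T = if T.1 ⊆ S then 1 else 0 := fun T =>
      (hpπ T).trans (supsetMass_eq_ite_of_mass_eq_zero hπ1 hpoint T.1)
    rcases S.eq_empty_or_nonempty with hS | hS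
    · left
      funext T
      simp [hpS, hS, T.2.ne_empty]
    · exact Or.inr ⟨⟨S, hS⟩, funext hpS⟩
  · rintro (rfl | ⟨S, rfl⟩) T
    · exact Or.inl rfl
    · unfold pOne
      split_ifs <;> simp

/-- A collection `p ∈ P` is `{0,1}`-valued iff `p = 0` or `p = p^{1,S}` for some
nonempty `S ⊆ A`. -/
theorem zero_one_valued_iff (hJ : 1 ≤ Fintype.card A)
    (p : {S : Finset A // S.Nonempty} → ℝ) (hp : memP p) :
    (∀ S, p S = 0 ∨ p S = 1) ↔
      (p = 0 ∨ ∃ S : {S : Finset A // S.Nonempty}, p = pOne S) :=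
  zero_one_valued_iff_general p hp
end

section
/- For every p ∈ P with p ≠ 0, there exists a unique family (α_T)_{∅ ≠ T ⊆ A} of nonnegative real numbers with Σ_{∅ ≠ T ⊆ A} α_T ≤ 1 such that p = Σ_{∅ ≠ T ⊆ A} α_T · p^{1,T}. -/
open Finset

variable {A : Type*} [Fintype A] [DecidableEq A]

/- Evaluated at `S`, the combination `Σ_T α_T • p^{1,T}` is the upper sum
`Σ_{T ⊇ S} α_T`. Writing `p` through its distribution `π`, `α_T = π_T` is a decomposition, and
it is the only one because upper sums determine a function on a finite poset: at a maximal
element the upper sum is the value itself, and one descends by well-founded induction. -/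

section UpperSums

variable {ι M : Type*} [Fintype ι] [PartialOrder ι] [DecidableLE ι] [AddCommGroup M]

theorem eq_zero_of_forall_sum_filter_le_eq_zero {f : ι → M}
    (h : ∀ i, ∑ j with i ≤ j, f j = 0) : f = 0 := by
  have : WellFoundedGT ι := Finite.to_wellFoundedGT
  funext i
  induction i using WellFoundedGT.induction with
  | _ i ih =>
    rw [Pi.zero_apply, ← h i,
      sum_eq_single i (fun j hj hji => ih j ((mem_filter.1 hj).2.lt_of_ne' hji)) (by simp)]

theorem eq_of_forall_sum_filter_le_eq {f g : ι → M}
    (h : ∀ i, ∑ j with i ≤ j, f j = ∑ j with i ≤ j, g j) : f = g :=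
  sub_eq_zero.1 <| eq_zero_of_forall_sum_filter_le_eq_zero fun i => by
    simp [sum_sub_distrib, h i]

end UpperSums

theorem Fintype.sum_subtype_le_sum {β N : Type*} [Fintype β] [AddCommMonoid N] [Preorder N]
    [AddLeftMono N] (p : β → Prop) [DecidablePred p] {f : β → N} (hf : ∀ x, 0 ≤ f x) : ∑ x : Subtype p, f x ≤ ∑ x, f x := by
  rw [← sum_subtype (univ.filter p) (by simp)]
  exact sum_le_univ_sum_of_nonneg hf

theorem sum_superset_eq_sum_nonempty_superset {M : Type*} [AddCommMonoid M] (f : Finset A → M)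
    (S : {S : Finset A // S.Nonempty}) :
    ∑ W with S.1 ⊆ W, f W = ∑ T with S ≤ T, f T.1 := by
  rw [← sum_subtype_map_embedding fun _ _ => rfl]
  congr 1
  ext W
  simp only [mem_filter, mem_univ, true_and, mem_map, Function.Embedding.subtype_apply]
  exact ⟨fun hSW => ⟨⟨W, S.2.mono hSW⟩, hSW, rfl⟩, by rintro ⟨T, hST, rfl⟩; exact hST⟩

theorem sum_smul_pOne_apply (α : {S : Finset A // S.Nonempty} → ℝ)
    (S : {S : Finset A // S.Nonempty}) :
    (∑ T, α T • pOne T) S = ∑ T with S ≤ T, α T := by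
  simp [Finset.sum_apply, pOne, sum_filter, ← Subtype.coe_le_coe]

theorem eq_sum_smul_pOne_iff (p α : {S : Finset A // S.Nonempty} → ℝ) :
    p = ∑ T, α T • pOne T ↔ ∀ S, p S = ∑ T with S ≤ T, α T := by
  simp only [funext_iff, sum_smul_pOne_apply]

theorem unique_decomposition_general
    (p : {S : Finset A // S.Nonempty} → ℝ) (hp : memP p) :
    ∃! α : {S : Finset A // S.Nonempty} → ℝ,
      (∀ T, 0 ≤ α T) ∧ (∑ T : {S : Finset A // S.Nonempty}, α T) ≤ 1 ∧
        p = ∑ T : {S : Finset A // S.Nonempty}, α T • pOne T := by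
  obtain ⟨π, hπ_nonneg, hπ_sum, hpπ⟩ := hp
  have hp_upper : ∀ S, p S = ∑ T with S ≤ T, π T.1 := fun S =>
    (hpπ S).trans (sum_superset_eq_sum_nonempty_superset π S)
  refine ⟨fun T => π T.1, ⟨fun T => hπ_nonneg T.1,
    (Fintype.sum_subtype_le_sum _ hπ_nonneg).trans hπ_sum.le,
    (eq_sum_smul_pOne_iff p _).2 hp_upper⟩, ?_⟩
  rintro α ⟨-, -, hpα⟩
  rw [eq_sum_smul_pOne_iff] at hpα
  exact eq_of_forall_sum_filter_le_eq fun S => (hpα S).symm.trans (hp_upper S)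

/-- For every `p ∈ P` with `p ≠ 0`, there is a unique family `(α_T)_{∅ ≠ T ⊆ A}` of
nonnegative reals summing to at most `1` with `p = Σ_T α_T • p^{1,T}`. -/
theorem unique_decomposition (hJ : 1 ≤ Fintype.card A)
    (p : {S : Finset A // S.Nonempty} → ℝ) (hp : memP p) (hne : p ≠ 0) :
    ∃! α : {S : Finset A // S.Nonempty} → ℝ,
      (∀ T, 0 ≤ α T) ∧ (∑ T : {S : Finset A // S.Nonempty}, α T) ≤ 1 ∧
        p = ∑ T : {S : Finset A // S.Nonempty}, α T • pOne T :=
  unique_decomposition_general p hp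
end

section
/- (Theorem 1.) Let m : U × P → [0,∞) be a performance measure such that for every p ∈ P the map u ↦ m(u,p) is continuous on U. Then m satisfies 'same contribution—same impact' and 'expected valuation for single-axiom-reducible problems' if and only if m is the weighted Möbius performance measure, i.e. m(u,p) = Σ_{∅ ≠ S ⊆ A} u_S · Σ_{T : S ⊆ T ⊆ A} (−1)^{|T ∖ S|} p_T for all (u,p) ∈ U × P. -/
/-! Möbius inversion identifies the contribution `α^p_S` with the mass `π_S` that any
representing distribution puts on `S`; hence `α^p_S ∈ [0,1]`, and `λ • p^{1,S}` has contribution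
`λ` at `S` and `0` elsewhere. Comparing `p` with `α^p_S • p^{1,S}`, whose values expected
valuation prescribes, same contribution—same impact shows that changing a capacity only at `S`
changes `m (u, p)` by `(u'_S - u_S) α^p_S`. A capacity is reached from `0` by switching on its
values on a growing upper set, one minimal set at a time; every intermediate function is a
capacity, and the increments telescope to the Möbius formula. -/

open Finset

variable {A : Type*} [Fintype A] [DecidableEq A]

/-- The contribution `α^p_S = Σ_{T ⊇ S} (−1)^{|T ∖ S|} p_T` of `S` under `p`. -/
def contrib (p : {S : Finset A // S.Nonempty} → ℝ) (S : {S : Finset A // S.Nonempty}) : ℝ :=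
  ∑ T ∈ Finset.univ.filter
      (fun T : {T : Finset A // T.Nonempty} => S.1 ⊆ T.1),
    (-1 : ℝ) ^ (T.1 \ S.1).card * p T

/-- `u` is a capacity: nonnegative and monotone with respect to inclusion. -/
def IsCapacity (u : {S : Finset A // S.Nonempty} → ℝ) : Prop :=
  (∀ S, 0 ≤ u S) ∧
    ∀ T S : {S : Finset A // S.Nonempty}, T.1 ⊆ S.1 → u T ≤ u S

/-- `m` satisfies *expected valuation for single-axiom-reducible problems*:
`m (u, λ • p^{1,S}) = λ * u S`. -/
def ExpectedValuation
    (m : ({S : Finset A // S.Nonempty} → ℝ) → ({S : Finset A // S.Nonempty} → ℝ) → ℝ) :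
    Prop :=
  ∀ l : ℝ, 0 ≤ l → l ≤ 1 → ∀ S : {S : Finset A // S.Nonempty},
    ∀ u, IsCapacity u → m u (l • pOne S) = l * u S

/-- `m` satisfies *same contribution—same impact*. -/
def SameContribSameImpact
    (m : ({S : Finset A // S.Nonempty} → ℝ) → ({S : Finset A // S.Nonempty} → ℝ) → ℝ) :
    Prop :=
  ∀ p p', memP p → memP p' → ∀ S : {S : Finset A // S.Nonempty},
    contrib p S = contrib p' S →
      ∀ u u', IsCapacity u → IsCapacity u' → (∀ T, T ≠ S → u' T = u T) →
        m u' p - m u p = m u' p' - m u p'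

set_option linter.unusedSectionVars false

theorem Finset.sum_Icc_neg_one_pow_card_sdiff {α R : Type*} [DecidableEq α] [Ring R]
    {s t : Finset α} (h : s ⊆ t) :
    ∑ u ∈ Icc s t, (-1 : R) ^ #(u \ s) = if s = t then 1 else 0 := by
  have hcancel : ∀ v ∈ (t \ s).powerset, (s ∪ v) \ s = v := fun v hv =>
    union_sdiff_cancel_left (disjoint_of_subset_right (mem_powerset.1 hv) disjoint_sdiff)
  have hinj : Set.InjOn (s ∪ ·) ↑(t \ s).powerset := fun v hv w hw hvw => by
    rw [← hcancel v hv, ← hcancel w hw]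
    exact congrArg (· \ s) hvw
  rw [Icc_eq_image_powerset h, sum_image hinj, sum_congr rfl fun v hv => by rw [hcancel v hv]]
  have := congrArg (Int.cast : ℤ → R) (sum_powerset_neg_one_pow_card (x := t \ s))
  push_cast at this
  rw [this]
  exact if_congr (sdiff_eq_empty_iff_subset.trans ⟨h.antisymm, fun hst => hst ▸ subset_rfl⟩)
    rfl rfl

theorem Finset.sum_superset_neg_one_pow_mul_sum_superset {α R : Type*} [Fintype α]
    [DecidableEq α] [Ring R] (f : Finset α → R) (s : Finset α) :
    ∑ t with s ⊆ t, (-1 : R) ^ #(t \ s) * ∑ w with t ⊆ w, f w = f s := by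
  simp_rw [mul_sum]
  rw [sum_comm' (t' := {w | s ⊆ w}) (s' := fun w => Icc s w)]
  · rw [sum_congr rfl fun w hw => by
      rw [← sum_mul, sum_Icc_neg_one_pow_card_sdiff (mem_filter.1 hw).2]]
    simp [sum_ite_eq]
  · intro t w
    simp only [mem_filter, mem_univ, true_and, mem_Icc]
    exact ⟨fun h => ⟨⟨h.1, h.2⟩, h.1.trans h.2⟩, fun h => ⟨h.1.1, h.1.2⟩⟩

theorem sum_filter_superset_subtype_val {R : Type*} [AddCommMonoid R]
    (S : {S : Finset A // S.Nonempty}) (g : Finset A → R) :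
    ∑ T ∈ univ.filter (fun T : {T : Finset A // T.Nonempty} => S.1 ⊆ T.1), g T.1 =
      ∑ T with S.1 ⊆ T, g T := by
  refine (sum_map _ (Function.Embedding.subtype _) g).symm.trans ?_
  congr 1
  ext T
  simp only [mem_map, mem_filter, mem_univ, true_and, Function.Embedding.coe_subtype]
  exact ⟨by rintro ⟨T, hST, rfl⟩; exact hST, fun hST => ⟨⟨T, S.2.mono hST⟩, hST, rfl⟩⟩

theorem contrib_eq_of_eq_sum_superset {p : {S : Finset A // S.Nonempty} → ℝ}
    (π : Finset A → ℝ) (hp : ∀ S : {S : Finset A // S.Nonempty},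
      p S = ∑ W ∈ Finset.univ.filter (fun W : Finset A => S.1 ⊆ W), π W)
    (S : {S : Finset A // S.Nonempty}) : contrib p S = π S.1 := by
  simp only [contrib, hp]
  rw [sum_filter_superset_subtype_val S (fun T => (-1 : ℝ) ^ #(T \ S.1) * ∑ W with T ⊆ W, π W),
    sum_superset_neg_one_pow_mul_sum_superset]

theorem contrib_smul_pOne (l : ℝ) (S T : {S : Finset A // S.Nonempty}) :
    contrib (l • pOne S) T = if T = S then l else 0 := by
  rw [contrib_eq_of_eq_sum_superset (fun W => if W = S.1 then l else 0)]
  · simp [Subtype.ext_iff]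
  · intro T
    simp [pOne, sum_ite_eq']

theorem memP_smul_pOne {l : ℝ} (h0 : 0 ≤ l) (h1 : l ≤ 1) (S : {S : Finset A // S.Nonempty}) :
    memP (l • pOne S) := by
  -- the mass `1 - l` sits on `∅`, which contains no nonempty `T`
  refine ⟨fun W => (if W = S.1 then l else 0) + (if W = ∅ then 1 - l else 0), fun W => ?_, ?_,
    fun T => ?_⟩
  · have : (0 : ℝ) ≤ 1 - l := sub_nonneg.2 h1
    positivity
  · simp [sum_add_distrib]
  · simp [sum_add_distrib, pOne, sum_ite_eq', T.2.ne_empty]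

theorem contrib_mem_Icc {p : {S : Finset A // S.Nonempty} → ℝ} (hp : memP p)
    (S : {S : Finset A // S.Nonempty}) : contrib p S ∈ Set.Icc 0 1 := by
  obtain ⟨π, hπ, hπ_sum, hpπ⟩ := hp
  rw [contrib_eq_of_eq_sum_superset π hpπ]
  exact ⟨hπ _, hπ_sum ▸ single_le_sum (fun W _ => hπ W) (mem_univ _)⟩

theorem Finset.sum_mul_sub_sum_mul_of_eq_of_ne {ι R : Type*} [Fintype ι] [Ring R]
    {u u' c : ι → R} {S : ι} (h : ∀ T, T ≠ S → u' T = u T) :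
    ∑ T, u' T * c T - ∑ T, u T * c T = (u' S - u S) * c S := by
  rw [← sum_sub_distrib, sum_eq_single S (fun T _ hT => by rw [h T hT, sub_self]) (by simp),
    sub_mul]

theorem IsCapacity.indicator {u : {S : Finset A // S.Nonempty} → ℝ} (hu : IsCapacity u)
    {D : Set {S : Finset A // S.Nonempty}} (hD : IsUpperSet D) : IsCapacity (D.indicator u) := by
  have hnonneg : ∀ S, 0 ≤ D.indicator u S := Set.indicator_nonneg fun S _ => hu.1 S
  refine ⟨hnonneg, fun T S hTS => ?_⟩
  by_cases hT : T ∈ D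
  · rw [Set.indicator_of_mem hT, Set.indicator_of_mem (hD hTS hT)]
    exact hu.2 T S hTS
  · rw [Set.indicator_of_notMem hT]
    exact hnonneg S

theorem eq_sum_mul_of_forall_sub_eq {F : ({S : Finset A // S.Nonempty} → ℝ) → ℝ}
    {c : {S : Finset A // S.Nonempty} → ℝ} (h0 : F 0 = 0)
    (hstep : ∀ u u' S, IsCapacity u → IsCapacity u' → (∀ T, T ≠ S → u' T = u T) →
      F u' - F u = (u' S - u S) * c S)
    {u : {S : Finset A // S.Nonempty} → ℝ} (hu : IsCapacity u) :
    F u = ∑ S, u S * c S := by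
  suffices ∀ D : Finset {S : Finset A // S.Nonempty},
      IsUpperSet (D : Set {S : Finset A // S.Nonempty}) →
        F (Set.indicator (↑D) u) = ∑ S ∈ D, u S * c S by
    simpa using this univ (by simpa using isUpperSet_univ)
  intro D
  induction D using Finset.strongInduction with
  | H D ih =>
  intro hD
  rcases D.eq_empty_or_nonempty with rfl | hne
  · rwa [coe_empty, Set.indicator_empty', sum_empty]
  obtain ⟨S, hS⟩ := D.exists_minimal hne
  have hD' : IsUpperSet (↑(D.erase S) : Set {S : Finset A // S.Nonempty}) :=
    coe_erase S D ▸ hD.erase fun T hT hTS => le_antisymm hTS (hS.2 hT hTS)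
  have hagree : ∀ T, T ≠ S →
      Set.indicator (↑D) u T = Set.indicator (↑(D.erase S)) u T := by
    intro T hT
    simp [Set.indicator_apply, hT]
  calc F (Set.indicator (↑D) u)
      = F (Set.indicator (↑(D.erase S)) u) + u S * c S := by
        have := hstep _ _ S (hu.indicator hD') (hu.indicator hD) hagree
        rw [Set.indicator_of_mem (mem_coe.2 hS.prop),
          Set.indicator_of_notMem (by simp), sub_zero] at this
        linarith
    _ = ∑ T ∈ D, u T * c T := by
        rw [ih _ (erase_ssubset hS.prop) hD', sum_erase_add _ _ hS.prop]

section PerformanceMeasure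

variable {m : ({S : Finset A // S.Nonempty} → ℝ) → ({S : Finset A // S.Nonempty} → ℝ) → ℝ}

theorem sameContribSameImpact_of_eq_mobius (hm : ∀ u p, IsCapacity u → memP p →
      m u p = ∑ S : {S : Finset A // S.Nonempty}, u S * contrib p S) :
    SameContribSameImpact m := by
  intro p p' hp hp' S hpp' u u' hu hu' huu'
  rw [hm u p hu hp, hm u' p hu' hp, hm u p' hu hp', hm u' p' hu' hp',
    sum_mul_sub_sum_mul_of_eq_of_ne huu', sum_mul_sub_sum_mul_of_eq_of_ne huu', hpp']

theorem expectedValuation_of_eq_mobius (hm : ∀ u p, IsCapacity u → memP p →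
      m u p = ∑ S : {S : Finset A // S.Nonempty}, u S * contrib p S) :
    ExpectedValuation m := by
  intro l h0 h1 S u hu
  rw [hm u _ hu (memP_smul_pOne h0 h1 S)]
  simp [contrib_smul_pOne, mul_comm]

theorem SameContribSameImpact.sub_eq_mul_contrib (hSC : SameContribSameImpact m)
    (hEV : ExpectedValuation m) {p : {S : Finset A // S.Nonempty} → ℝ} (hp : memP p)
    {u u' : {S : Finset A // S.Nonempty} → ℝ} {S : {S : Finset A // S.Nonempty}}
    (hu : IsCapacity u) (hu' : IsCapacity u') (huu' : ∀ T, T ≠ S → u' T = u T) :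
    m u' p - m u p = (u' S - u S) * contrib p S := by
  obtain ⟨h0, h1⟩ := contrib_mem_Icc hp S
  have hp' := memP_smul_pOne h0 h1 S
  have hpp' : contrib p S = contrib (contrib p S • pOne S) S := by simp [contrib_smul_pOne]
  rw [hSC p _ hp hp' S hpp' u u' hu hu' huu', hEV _ h0 h1 S u' hu', hEV _ h0 h1 S u hu, sub_mul,
    mul_comm, mul_comm (u S)]

theorem SameContribSameImpact.eq_sum_mul_contrib (hSC : SameContribSameImpact m)
    (hEV : ExpectedValuation m) {p : {S : Finset A // S.Nonempty} → ℝ} (hp : memP p)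
    (hzero : m 0 p = 0)
    {u : {S : Finset A // S.Nonempty} → ℝ} (hu : IsCapacity u) :
    m u p = ∑ S, u S * contrib p S :=
  eq_sum_mul_of_forall_sub_eq (F := fun u => m u p) hzero
    (fun _ _ _ hu hu' huu' => hSC.sub_eq_mul_contrib hEV hp hu hu' huu') hu

end PerformanceMeasure

theorem theorem1_general
    (m : ({S : Finset A // S.Nonempty} → ℝ) → ({S : Finset A // S.Nonempty} → ℝ) → ℝ)
    (hzero : ∀ p, memP p → m 0 p = 0) :
    (SameContribSameImpact m ∧ ExpectedValuation m) ↔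
      ∀ u p, IsCapacity u → memP p →
        m u p = ∑ S : {S : Finset A // S.Nonempty}, u S * contrib p S :=
  ⟨fun ⟨hSC, hEV⟩ _ p hu hp => hSC.eq_sum_mul_contrib hEV hp (hzero p hp) hu,
    fun hm => ⟨sameContribSameImpact_of_eq_mobius hm, expectedValuation_of_eq_mobius hm⟩⟩

/-- Theorem 1: a performance measure, continuous in the capacity, satisfies
*same contribution—same impact* and *expected valuation for single-axiom-reducible
problems* iff it is the weighted Möbius performance measure. -/
theorem theorem1 (hJ : 1 ≤ Fintype.card A)
    (m : ({S : Finset A // S.Nonempty} → ℝ) → ({S : Finset A // S.Nonempty} → ℝ) → ℝ)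
    (hnonneg : ∀ u p, IsCapacity u → memP p → 0 ≤ m u p)
    (hzero : ∀ p, memP p → m 0 p = 0)
    (hcont : ∀ p, memP p → ContinuousOn (fun u => m u p) {u | IsCapacity u}) :
    (SameContribSameImpact m ∧ ExpectedValuation m) ↔
      ∀ u p, IsCapacity u → memP p →
        m u p = ∑ S : {S : Finset A // S.Nonempty}, u S * contrib p S :=
  theorem1_general m hzero
end

section
/- For every capacity u ∈ U and every p ∈ P, the weighted Möbius performance measure is nonnegative: ddot-m(u, p) = Σ_{∅ ≠ S ⊆ A} u_S · Σ_{T : S ⊆ T ⊆ A} (−1)^{|T ∖ S|} p_T ≥ 0. (Hence ddot-m is a well-defined performance measure U × P → [0,∞).) -/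
open Finset

variable {A : Type*} [Fintype A] [DecidableEq A]

/-! If `p_S = Σ_{W ⊇ S} π_W`, Möbius inversion on the lattice of subsets of `A` gives back
`α^p_S = π_S`, so `ddot-m(u, p) = Σ_S u_S π_S` is a sum of products of nonnegative numbers. -/

namespace Finset

variable {α R : Type*} [DecidableEq α] [Ring R]

theorem sum_Icc_neg_one_pow_card_sdiff_s18 (s t : Finset α) :
    ∑ u ∈ Icc s t, (-1 : R) ^ #(u \ s) = if s = t then 1 else 0 := by
  by_cases hst : s ⊆ t
  · have union_sdiff : ∀ x ∈ (t \ s).powerset, (s ∪ x) \ s = x := fun x hx =>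
      union_sdiff_cancel_left (disjoint_of_subset_right (mem_powerset.1 hx) disjoint_sdiff)
    have hinj : Set.InjOn (s ∪ ·) (t \ s).powerset := fun x hx y hy hxy => by
      rw [← union_sdiff x hx, ← union_sdiff y hy]
      exact congrArg (· \ s) hxy
    rw [Icc_eq_image_powerset hst, sum_image hinj,
      sum_congr rfl fun x hx => by rw [union_sdiff x hx]]
    have := congrArg (Int.cast : ℤ → R) (sum_powerset_neg_one_pow_card (x := t \ s))
    push_cast at this
    rw [this]
    exact if_congr (sdiff_eq_empty_iff_subset.trans ⟨subset_antisymm hst, fun h => h ▸ subset_rfl⟩)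
      rfl rfl
  · rw [Icc_eq_empty hst, sum_empty, if_neg (by rintro rfl; exact hst subset_rfl)]

theorem sum_neg_one_pow_card_sdiff_mul_sum_supset [Fintype α] (f : Finset α → R) (s : Finset α) :
    ∑ t with s ⊆ t, (-1 : R) ^ #(t \ s) * ∑ w with t ⊆ w, f w = f s := by
  simp_rw [mul_sum]
  rw [sum_comm' (t' := univ) (s' := fun w => Icc s w) (by simp)]
  simp_rw [← sum_mul, sum_Icc_neg_one_pow_card_sdiff_s18, ite_mul, one_mul, zero_mul]
  simp

theorem sum_filter_subtype_val {β M : Type*} [Fintype β] [AddCommMonoid M]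
    {q P : β → Prop} [Fintype (Subtype q)] [DecidablePred P] (hPq : ∀ x, P x → q x)
    (f : β → M) :
    ∑ x : Subtype q with P x.1, f x.1 = ∑ x with P x, f x :=
  sum_bij (fun x _ => x.1) (fun x hx => by simpa using hx) (fun _ _ _ _ => Subtype.ext)
    (fun x hx => ⟨⟨x, hPq x (mem_filter.1 hx).2⟩, by simpa using hx, rfl⟩) fun _ _ => rfl

end Finset

theorem contrib_eq_of_eq_sum_supset (p : {S : Finset A // S.Nonempty} → ℝ) (π : Finset A → ℝ)
    (hpπ : ∀ S : {S : Finset A // S.Nonempty}, p S = ∑ W with S.1 ⊆ W, π W)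
    (S : {S : Finset A // S.Nonempty}) : contrib p S = π S.1 :=
  calc contrib p S
      = ∑ T : Finset A with S.1 ⊆ T, (-1 : ℝ) ^ #(T \ S.1) * ∑ W with T ⊆ W, π W := by
        simp only [contrib, hpπ]
        exact sum_filter_subtype_val (fun T hST => S.2.mono hST)
          fun T => (-1 : ℝ) ^ #(T \ S.1) * ∑ W with T ⊆ W, π W
    _ = π S.1 := sum_neg_one_pow_card_sdiff_mul_sum_supset π S.1

theorem mobius_measure_nonneg_general
    (u p : {S : Finset A // S.Nonempty} → ℝ) (hu : IsCapacity u) (hp : memP p) :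
    0 ≤ ∑ S : {S : Finset A // S.Nonempty}, u S * contrib p S := by
  obtain ⟨π, hπ_nonneg, -, hpπ⟩ := hp
  refine sum_nonneg fun S _ => mul_nonneg (hu.1 S) ?_
  rw [contrib_eq_of_eq_sum_supset p π hpπ S]
  exact hπ_nonneg S.1

/-- The weighted Möbius performance measure is nonnegative on `U × P`:
`ddot-m(u,p) = Σ_{∅ ≠ S ⊆ A} u_S α^p_S ≥ 0`. -/
theorem mobius_measure_nonneg (hJ : 1 ≤ Fintype.card A)
    (u p : {S : Finset A // S.Nonempty} → ℝ) (hu : IsCapacity u) (hp : memP p) :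
    0 ≤ ∑ S : {S : Finset A // S.Nonempty}, u S * contrib p S :=
  mobius_measure_nonneg_general u p hu hp
end
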